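/- arXiv:2511.21621 — 3 statements merged into one kernel-verified Lean document; each statement's English description precedes it below -/
import Mathlib

section
/- Let X be a Polish space and let c : X × X → [0,1] be a lower semi-continuous 1-bounded pseudometric on X. Then the optimal transport cost W(c) is a 1-bounded pseudometric on the set of Borel probability measures on X: for all Borel probability measures P, Q, R on X one has 0 ≤ W(c)(P,Q) ≤ 1, W(c)(P,P) = 0, W(c)(P,Q) = W(c)(Q,P), and W(c)(P,R) ≤ W(c)(P,Q) + W(c)(Q,R). -/
open MeasureTheory Topology Filter BoundedContinuousFunction NNReal ProbabilityTheory

noncomputable section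

/-- A 1-bounded pseudometric on a type `X`. -/
structure IsPseudometric {X : Type*} (m : X → X → ℝ) : Prop where
  nonneg : ∀ x y, 0 ≤ m x y
  le_one : ∀ x y, m x y ≤ 1
  refl : ∀ x, m x x = 0
  symm : ∀ x y, m x y = m y x
  triangle : ∀ x y z, m x z ≤ m x y + m y z

/-- `γ` is a coupling of `P` and `Q`. -/
def IsCoupling {X Y : Type*} [MeasurableSpace X] [MeasurableSpace Y]
    (γ : Measure (X × Y)) (P : Measure X) (Q : Measure Y) : Prop :=
  IsProbabilityMeasure γ ∧ γ.map Prod.fst = P ∧ γ.map Prod.snd = Q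

/-- The optimal transport cost `W(c)(P,Q) = inf_{γ ∈ Γ(P,Q)} ∫ c dγ`. -/
def Wc {X : Type*} [MeasurableSpace X] (c : X → X → ℝ) (P Q : Measure X) : ℝ :=
  sInf {r : ℝ | ∃ γ : Measure (X × X), IsCoupling γ P Q ∧ r = ∫ z, c z.1 z.2 ∂γ}

section Helpers

variable {α β δ : Type*} [MeasurableSpace α] [MeasurableSpace β] [MeasurableSpace δ]

lemma integrable_of_bdd {μ : Measure α} [IsFiniteMeasure μ] {f : α → ℝ}
    (hm : Measurable f) (h0 : ∀ x, 0 ≤ f x) (h1 : ∀ x, f x ≤ 1) : Integrable f μ :=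
  (integrable_const (1 : ℝ)).mono' hm.aestronglyMeasurable
    (Filter.Eventually.of_forall fun x => by
      rw [Real.norm_eq_abs, abs_of_nonneg (h0 x)]; exact h1 x)

lemma map_compProd_prod_fst (μ : Measure α) [SFinite μ] (κ : Kernel α β) (η : Kernel α δ)
    [IsSFiniteKernel κ] [IsMarkovKernel η] :
    (μ ⊗ₘ (κ ×ₖ η)).map (fun p => (p.1, p.2.1)) = μ ⊗ₘ κ := by
  have hg : Measurable (fun p : α × β × δ => (p.1, p.2.1)) :=
    measurable_fst.prodMk (measurable_fst.comp measurable_snd)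
  ext s hs
  rw [Measure.map_apply hg hs, Measure.compProd_apply (hg hs), Measure.compProd_apply hs]
  refine lintegral_congr fun a => ?_
  have h1 : (Prod.mk a ⁻¹' ((fun p : α × β × δ => (p.1, p.2.1)) ⁻¹' s))
      = {p : β × δ | p.1 ∈ Prod.mk a ⁻¹' s} := rfl
  rw [h1, ← Kernel.fst_apply' _ _ (measurable_prodMk_left hs), Kernel.fst_prod]

lemma map_compProd_prod_snd (μ : Measure α) [SFinite μ] (κ : Kernel α β) (η : Kernel α δ)
    [IsMarkovKernel κ] [IsSFiniteKernel η] :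
    (μ ⊗ₘ (κ ×ₖ η)).map (fun p => (p.1, p.2.2)) = μ ⊗ₘ η := by
  have hg : Measurable (fun p : α × β × δ => (p.1, p.2.2)) :=
    measurable_fst.prodMk (measurable_snd.comp measurable_snd)
  ext s hs
  rw [Measure.map_apply hg hs, Measure.compProd_apply (hg hs), Measure.compProd_apply hs]
  refine lintegral_congr fun a => ?_
  have h1 : (Prod.mk a ⁻¹' ((fun p : α × β × δ => (p.1, p.2.2)) ⁻¹' s))
      = {p : β × δ | p.2 ∈ Prod.mk a ⁻¹' s} := rfl
  rw [h1, show {p : β × δ | p.2 ∈ Prod.mk a ⁻¹' s} = Prod.snd ⁻¹' (Prod.mk a ⁻¹' s) from rfl,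
    ← Kernel.snd_apply' _ _ (measurable_prodMk_left hs), Kernel.snd_prod]

end Helpers

theorem Wc_isPseudometric
    {X : Type*} [MetricSpace X] [PolishSpace X] [MeasurableSpace X] [BorelSpace X]
    (c : X → X → ℝ) (hlsc : LowerSemicontinuous fun p : X × X => c p.1 p.2)
    (hpm : IsPseudometric c)
    (P Q R : Measure X)
    (hP : IsProbabilityMeasure P) (hQ : IsProbabilityMeasure Q)
    (hR : IsProbabilityMeasure R) :
    (0 ≤ Wc c P Q ∧ Wc c P Q ≤ 1) ∧ Wc c P P = 0 ∧ Wc c P Q = Wc c Q P ∧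
      Wc c P R ≤ Wc c P Q + Wc c Q R := by
  have hc : Measurable fun p : X × X => c p.1 p.2 := hlsc.measurable
  have hc' : Measurable fun p : X × X => c p.2 p.1 :=
    hc.comp measurable_swap
  haveI : Nonempty X := by
    by_contra h
    rw [not_nonempty_iff] at h
    have h1 := hP.measure_univ
    rw [Set.univ_eq_empty_iff.mpr h, measure_empty] at h1
    exact zero_ne_one h1
  -- the set of costs of couplings
  set S : Measure X → Measure X → Set ℝ := fun A B =>
    {r : ℝ | ∃ γ : Measure (X × X), IsCoupling γ A B ∧ r = ∫ z, c z.1 z.2 ∂γ} with hS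
  -- product coupling shows nonemptiness
  have hprodmem : ∀ (A B : Measure X), IsProbabilityMeasure A → IsProbabilityMeasure B →
      (∫ z, c z.1 z.2 ∂(A.prod B)) ∈ S A B := by
    intro A B hA hB
    haveI := hA; haveI := hB
    refine ⟨A.prod B, ⟨inferInstance, ?_, ?_⟩, rfl⟩
    · simp [Measure.map_fst_prod]
    · simp [Measure.map_snd_prod]
  have hne : ∀ (A B : Measure X), IsProbabilityMeasure A → IsProbabilityMeasure B →
      (S A B).Nonempty := fun A B hA hB => ⟨_, hprodmem A B hA hB⟩
  have hlb : ∀ (A B : Measure X), ∀ r ∈ S A B, (0:ℝ) ≤ r := by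
    rintro A B r ⟨γ, _, rfl⟩
    exact integral_nonneg fun z => hpm.nonneg _ _
  have hbdd : ∀ (A B : Measure X), BddBelow (S A B) := fun A B => ⟨0, hlb A B⟩
  -- cost of any coupling is at most 1
  have hub : ∀ (γ : Measure (X × X)), IsProbabilityMeasure γ →
      (∫ z, c z.1 z.2 ∂γ) ≤ 1 := by
    intro γ hγ
    haveI := hγ
    calc ∫ z, c z.1 z.2 ∂γ ≤ ∫ _z, (1:ℝ) ∂γ := by
          refine integral_mono (integrable_of_bdd hc (fun z => hpm.nonneg _ _)
            (fun z => hpm.le_one _ _)) (integrable_const 1) fun z => hpm.le_one _ _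
      _ = 1 := by simp
  -- nonnegativity of Wc
  have hWnn : ∀ (A B : Measure X), IsProbabilityMeasure A → IsProbabilityMeasure B →
      0 ≤ Wc c A B := fun A B hA hB => le_csInf (hne A B hA hB) (hlb A B)
  -- symmetry of coupling sets
  have hswap : ∀ A B : Measure X, S A B ⊆ S B A := by
    rintro A B r ⟨γ, ⟨hγp, hγf, hγs⟩, rfl⟩
    haveI := hγp
    refine ⟨γ.map Prod.swap, ⟨?_, ?_, ?_⟩, ?_⟩
    · exact Measure.isProbabilityMeasure_map measurable_swap.aemeasurable
    · rw [Measure.map_map measurable_fst measurable_swap]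
      exact hγs
    · rw [Measure.map_map measurable_snd measurable_swap]
      exact hγf
    · rw [integral_map measurable_swap.aemeasurable hc.aestronglyMeasurable]
      simp only [Prod.fst_swap, Prod.snd_swap]
      exact integral_congr_ae (Filter.Eventually.of_forall fun z => hpm.symm _ _)
  refine ⟨⟨hWnn P Q hP hQ, ?_⟩, ?_, ?_, ?_⟩
  · -- Wc ≤ 1
    refine le_trans (csInf_le (hbdd P Q) (hprodmem P Q hP hQ)) (hub _ ?_)
    infer_instance
  · -- Wc P P = 0
    refine le_antisymm ?_ (hWnn P P hP hP)
    have hdiag : (0:ℝ) ∈ S P P := by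
      have hd : Measurable (fun x : X => (x, x)) := measurable_id.prodMk measurable_id
      refine ⟨P.map (fun x => (x, x)), ⟨Measure.isProbabilityMeasure_map hd.aemeasurable, ?_, ?_⟩, ?_⟩
      · rw [Measure.map_map measurable_fst hd]; exact Measure.map_id
      · rw [Measure.map_map measurable_snd hd]; exact Measure.map_id
      · rw [integral_map hd.aemeasurable hc.aestronglyMeasurable]
        simp [hpm.refl]
    exact csInf_le (hbdd P P) hdiag
  · -- symmetry
    exact le_antisymm (csInf_le_csInf (hbdd P Q) (hne Q P hQ hP) (hswap Q P))
      (csInf_le_csInf (hbdd Q P) (hne P Q hP hQ) (hswap P Q))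
  · -- triangle inequality
    have key : ∀ r₁ ∈ S P Q, ∀ r₂ ∈ S Q R, Wc c P R ≤ r₁ + r₂ := by
      rintro r₁ ⟨γ₁, ⟨hγ₁p, hγ₁f, hγ₁s⟩, rfl⟩ r₂ ⟨γ₂, ⟨hγ₂p, hγ₂f, hγ₂s⟩, rfl⟩
      haveI := hγ₁p; haveI := hγ₂p; haveI := hQ
      set γ₁' : Measure (X × X) := γ₁.map Prod.swap with hγ₁'
      haveI : IsProbabilityMeasure γ₁' :=
        Measure.isProbabilityMeasure_map measurable_swap.aemeasurable
      have hfst1 : γ₁'.fst = Q := by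
        rw [Measure.fst, hγ₁', Measure.map_map measurable_fst measurable_swap]
        exact hγ₁s
      have hfst2 : γ₂.fst = Q := hγ₂f
      set κ₁ := γ₁'.condKernel with hκ₁
      set κ₂ := γ₂.condKernel with hκ₂
      have hd1 : Q ⊗ₘ κ₁ = γ₁' := by
        conv_lhs => rw [← hfst1]
        exact γ₁'.disintegrate γ₁'.condKernel
      have hd2 : Q ⊗ₘ κ₂ = γ₂ := by
        conv_lhs => rw [← hfst2]
        exact γ₂.disintegrate γ₂.condKernel
      set μ : Measure (X × X × X) := Q ⊗ₘ (κ₁ ×ₖ κ₂) with hμ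
      haveI : IsProbabilityMeasure μ := by rw [hμ]; infer_instance
      have hm1 : μ.map (fun p => (p.1, p.2.1)) = γ₁' := by
        rw [hμ, map_compProd_prod_fst, hd1]
      have hm2 : μ.map (fun p => (p.1, p.2.2)) = γ₂ := by
        rw [hμ, map_compProd_prod_snd, hd2]
      have hg1 : Measurable (fun p : X × X × X => (p.1, p.2.1)) :=
        measurable_fst.prodMk (measurable_fst.comp measurable_snd)
      have hg2 : Measurable (fun p : X × X × X => (p.1, p.2.2)) :=
        measurable_fst.prodMk (measurable_snd.comp measurable_snd)
      set γ : Measure (X × X) := μ.map Prod.snd with hγ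
      have hcoup : IsCoupling γ P R := by
        refine ⟨Measure.isProbabilityMeasure_map measurable_snd.aemeasurable, ?_, ?_⟩
        · rw [hγ, Measure.map_map measurable_fst measurable_snd]
          have he : (Prod.fst ∘ Prod.snd : X × X × X → X)
              = Prod.snd ∘ (fun p : X × X × X => (p.1, p.2.1)) := rfl
          rw [he, ← Measure.map_map measurable_snd hg1, hm1, hγ₁',
            Measure.map_map measurable_snd measurable_swap]
          exact hγ₁f
        · rw [hγ, Measure.map_map measurable_snd measurable_snd]
          have he : (Prod.snd ∘ Prod.snd : X × X × X → X)
              = Prod.snd ∘ (fun p : X × X × X => (p.1, p.2.2)) := rfl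
          rw [he, ← Measure.map_map measurable_snd hg2, hm2]
          exact hγ₂s
      have hcost : (∫ z, c z.1 z.2 ∂γ) ≤ (∫ z, c z.1 z.2 ∂γ₁) + ∫ z, c z.1 z.2 ∂γ₂ := by
        have e0 : (∫ z, c z.1 z.2 ∂γ) = ∫ p, c p.2.1 p.2.2 ∂μ := by
          rw [hγ, integral_map measurable_snd.aemeasurable hc.aestronglyMeasurable]
        have e1 : (∫ p, c p.2.1 p.1 ∂μ) = ∫ z, c z.1 z.2 ∂γ₁ := by
          have h1 : (∫ z, c z.2 z.1 ∂(μ.map (fun p => (p.1, p.2.1))))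
              = ∫ p, c p.2.1 p.1 ∂μ := by
            rw [integral_map hg1.aemeasurable hc'.aestronglyMeasurable]
          rw [← h1, hm1, hγ₁', integral_map measurable_swap.aemeasurable
            hc'.aestronglyMeasurable]
          simp
        have e2 : (∫ p, c p.1 p.2.2 ∂μ) = ∫ z, c z.1 z.2 ∂γ₂ := by
          rw [← hm2, integral_map hg2.aemeasurable hc.aestronglyMeasurable]
        have hint1 : Integrable (fun p : X × X × X => c p.2.1 p.1) μ := by
          refine integrable_of_bdd ?_ (fun p => hpm.nonneg _ _) (fun p => hpm.le_one _ _)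
          exact hc.comp ((measurable_fst.comp measurable_snd).prodMk measurable_fst)
        have hint2 : Integrable (fun p : X × X × X => c p.1 p.2.2) μ := by
          refine integrable_of_bdd ?_ (fun p => hpm.nonneg _ _) (fun p => hpm.le_one _ _)
          exact hc.comp (measurable_fst.prodMk (measurable_snd.comp measurable_snd))
        have hint0 : Integrable (fun p : X × X × X => c p.2.1 p.2.2) μ := by
          refine integrable_of_bdd ?_ (fun p => hpm.nonneg _ _) (fun p => hpm.le_one _ _)
          exact hc.comp measurable_snd
        calc (∫ z, c z.1 z.2 ∂γ) = ∫ p, c p.2.1 p.2.2 ∂μ := e0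
          _ ≤ ∫ p, (c p.2.1 p.1 + c p.1 p.2.2) ∂μ := by
              exact integral_mono hint0 (hint1.add hint2) fun p => hpm.triangle _ _ _
          _ = (∫ p, c p.2.1 p.1 ∂μ) + ∫ p, c p.1 p.2.2 ∂μ := integral_add hint1 hint2
          _ = (∫ z, c z.1 z.2 ∂γ₁) + ∫ z, c z.1 z.2 ∂γ₂ := by rw [e1, e2]
      exact le_trans (csInf_le (hbdd P R) ⟨γ, hcoup, rfl⟩) hcost
    have h1 : ∀ r₂ ∈ S Q R, Wc c P R - r₂ ≤ Wc c P Q := by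
      intro r₂ h₂
      exact le_csInf (hne P Q hP hQ) fun r₁ h₁ =>
        sub_le_iff_le_add.mpr (key r₁ h₁ r₂ h₂)
    have h2 : Wc c P R - Wc c P Q ≤ Wc c Q R :=
      le_csInf (hne Q R hQ hR) fun r₂ h₂ =>
        sub_le_iff_le_add.mpr (by linarith [h1 r₂ h₂])
    linarith
end
end

section
/- Let m be a 1-bounded pseudometric on E that is continuous as a function E × E → [0,1], and let 0 < c < 1. Then the discounted uniform pseudometric U_c(m) : Ω × Ω → [0,1] is continuous with respect to the product of the uniform-metric topologies on Ω. -/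
open MeasureTheory Topology Filter BoundedContinuousFunction NNReal

noncomputable section

/-- The space of (bounded) continuous trajectories `[0,∞) → E`, with the uniform metric. -/
abbrev Traj (E : Type*) [PseudoMetricSpace E] := BoundedContinuousFunction ℝ≥0 E

instance {E : Type*} [PseudoMetricSpace E] : MeasurableSpace (Traj E) := borel _
instance {E : Type*} [PseudoMetricSpace E] : BorelSpace (Traj E) := ⟨rfl⟩

/-- The discounted uniform pseudometric `U_c(m)(ω,ω') = sup_{t ≥ 0} c^t · m(ω(t), ω'(t))`. -/
def Udisc {E : Type*} [PseudoMetricSpace E] (c : ℝ) (m : E → E → ℝ)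
    (ω ω' : Traj E) : ℝ :=
  ⨆ t : ℝ≥0, c ^ (t : ℝ) * m (ω t) (ω' t)

/-- `P_t(x)`: the pushforward of `ℙ^x` under evaluation at time `t`. -/
def kernelAt {E : Type*} [PseudoMetricSpace E] [MeasurableSpace E]
    (ℙ : E → Measure (Traj E)) (t : ℝ≥0) (x : E) : Measure E :=
  (ℙ x).map fun ω => ω t

/-- The functional `F_c(m)(x,y) = sup_{t ≥ 0} c^t W(m)(P_t(x), P_t(y))`. -/
def Ffun {E : Type*} [PseudoMetricSpace E] [MeasurableSpace E]
    (ℙ : E → Measure (Traj E)) (c : ℝ) (m : E → E → ℝ) (x y : E) : ℝ :=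
  ⨆ t : ℝ≥0, c ^ (t : ℝ) * Wc m (kernelAt ℙ t x) (kernelAt ℙ t y)

/-- The functional `G_c(m)(x,y) = W(U_c(m))(ℙ^x, ℙ^y)`. -/
def Gfun {E : Type*} [PseudoMetricSpace E] [MeasurableSpace E]
    (ℙ : E → Measure (Traj E)) (c : ℝ) (m : E → E → ℝ) (x y : E) : ℝ :=
  Wc (Udisc c m) (ℙ x) (ℙ y)

/-- The family `x ↦ ℙ^x` is weakly continuous: if `xₙ → x` then
`∫ F dℙ^{xₙ} → ∫ F dℙ^x` for every bounded continuous `F`. -/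
def WeaklyContinuousFamily {A B : Type*} [TopologicalSpace A] [TopologicalSpace B]
    [MeasurableSpace B] (ℙ : A → Measure B) : Prop :=
  ∀ (F : B →ᵇ ℝ) (x : A) (u : ℕ → A), Tendsto u atTop (nhds x) →
    Tendsto (fun n => ∫ ω, F ω ∂(ℙ (u n))) atTop (nhds (∫ ω, F ω ∂(ℙ x)))

theorem Udisc_continuous
    {E : Type*} [MetricSpace E] [PolishSpace E]
    (hΔ : ∀ x y : E, dist x y ≤ 1)
    (m : E → E → ℝ) (hpm : IsPseudometric m)
    (hcont : Continuous fun p : E × E => m p.1 p.2)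
    (c : ℝ) (hc0 : 0 < c) (hc1 : c < 1) :
    Continuous fun p : Traj E × Traj E => Udisc c m p.1 p.2 := by
  set f : (Traj E × Traj E) → ℝ≥0 → ℝ := fun q t => c ^ (t : ℝ) * m (q.1 t) (q.2 t) with hfdef
  have hf : Continuous ↿f := by
    have hrp : Continuous fun t : ℝ≥0 => c ^ (t : ℝ) := by
      have h2 : (fun t : ℝ≥0 => c ^ (t : ℝ)) = fun t : ℝ≥0 => Real.exp (Real.log c * (t : ℝ)) := by
        funext t; rw [Real.rpow_def_of_pos hc0]
      rw [h2]
      exact Real.continuous_exp.comp (continuous_const.mul NNReal.continuous_coe)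
    have h1 : Continuous fun x : (Traj E × Traj E) × ℝ≥0 => x.1.1 x.2 :=
      continuous_eval.comp
        ((continuous_fst.comp continuous_fst).prodMk continuous_snd)
    have h1' : Continuous fun x : (Traj E × Traj E) × ℝ≥0 => x.1.2 x.2 :=
      continuous_eval.comp
        ((continuous_snd.comp continuous_fst).prodMk continuous_snd)
    exact (hrp.comp continuous_snd).mul (hcont.comp (h1.prodMk h1'))
  have hf0 : ∀ q t, 0 ≤ f q t := fun q t =>
    mul_nonneg (Real.rpow_nonneg hc0.le _) (hpm.nonneg _ _)
  have hfle : ∀ q t, f q t ≤ c ^ (t : ℝ) := fun q t => by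
    have := hpm.le_one (q.1 t) (q.2 t)
    calc f q t ≤ c ^ (t : ℝ) * 1 :=
          mul_le_mul_of_nonneg_left this (Real.rpow_nonneg hc0.le _)
      _ = c ^ (t : ℝ) := mul_one _
  have hfle1 : ∀ q t, f q t ≤ 1 := fun q t =>
    (hfle q t).trans (Real.rpow_le_one hc0.le hc1.le t.coe_nonneg)
  have hbdd : ∀ q, BddAbove (Set.range (f q)) := fun q =>
    ⟨1, by rintro r ⟨t, rfl⟩; exact hfle1 q t⟩
  set F : ℕ → (Traj E × Traj E) → ℝ := fun n q => sSup (f q '' Set.Icc 0 (n : ℝ≥0)) with hFdef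
  have hmem : ∀ n : ℕ, (0 : ℝ≥0) ∈ Set.Icc (0 : ℝ≥0) (n : ℝ≥0) :=
    fun n => ⟨le_refl _, n.cast_nonneg'⟩
  have hFcont : ∀ n, Continuous (F n) := fun n => isCompact_Icc.continuous_sSup hf
  have hbddim : ∀ n q, BddAbove (f q '' Set.Icc 0 (n : ℝ≥0)) := fun n q =>
    ⟨1, by rintro r ⟨t, -, rfl⟩; exact hfle1 q t⟩
  have hF0 : ∀ n q, 0 ≤ F n q := fun n q =>
    (hf0 q 0).trans (le_csSup (hbddim n q) ⟨0, hmem n, rfl⟩)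
  have hFle : ∀ n q, F n q ≤ Udisc c m q.1 q.2 := fun n q =>
    csSup_le ⟨_, ⟨0, hmem n, rfl⟩⟩ (by rintro r ⟨t, -, rfl⟩; exact le_ciSup (hbdd q) t)
  have hUle : ∀ n q, Udisc c m q.1 q.2 ≤ F n q + c ^ (((n : ℕ) : ℝ≥0) : ℝ) := by
    intro n q
    refine ciSup_le fun t => ?_
    rcases le_or_gt t (n : ℝ≥0) with ht | ht
    · exact le_add_of_le_of_nonneg (le_csSup (hbddim n q) ⟨t, ⟨t.coe_nonneg.trans le_rfl |>.trans (le_refl _) |> fun _ => zero_le (a := t), ht⟩, rfl⟩)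
        (Real.rpow_nonneg hc0.le _)
    · refine le_add_of_nonneg_of_le (hF0 n q) ?_
      refine (hfle q t).trans ?_
      exact Real.rpow_le_rpow_of_exponent_ge hc0 hc1.le (by exact_mod_cast ht.le)
  have hpow : Tendsto (fun n : ℕ => c ^ (((n : ℕ) : ℝ≥0) : ℝ)) atTop (nhds 0) := by
    have : ∀ n : ℕ, c ^ ((n : ℝ≥0) : ℝ) = c ^ n := fun n => by
      rw [show ((n : ℝ≥0) : ℝ) = (n : ℝ) by simp, Real.rpow_natCast]
    simp only [this]
    exact tendsto_pow_atTop_nhds_zero_of_lt_one hc0.le hc1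
  have hunif : TendstoUniformly F (fun q => Udisc c m q.1 q.2) atTop := by
    rw [Metric.tendstoUniformly_iff]
    intro ε hε
    filter_upwards [hpow.eventually (gt_mem_nhds hε)] with n hn q
    rw [Real.dist_eq, abs_of_nonneg (sub_nonneg.2 (hFle n q)), sub_lt_iff_lt_add']
    exact lt_of_le_of_lt (hUle n q) (by linarith)
  exact hunif.continuous (Filter.Frequently.of_forall hFcont)
end
end

section
/- Let (ℙ^x)_{x∈E} be a family of Borel probability measures on Ω such that for every x ∈ E the pushforward of ℙ^x under evaluation at time 0 is the Dirac measure δ_x. Let m be a lower semi-continuous 1-bounded pseudometric on E and let 0 < c ≤ 1. Then for every pair of states x, y ∈ E: m(x,y) ≤ sup_{t≥0} c^t W(m)(P_t(x), P_t(y)) ≤ W(U_c(m))(ℙ^x, ℙ^y); that is, m ≤ F_c(m) ≤ G_c(m) pointwise. -/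
open MeasureTheory Topology Filter BoundedContinuousFunction NNReal

noncomputable section

section Aux

open TopologicalSpace Set

/-- Product coupling exists. -/
lemma isCoupling_prod {X : Type*} [MeasurableSpace X] (P Q : Measure X)
    [IsProbabilityMeasure P] [IsProbabilityMeasure Q] :
    IsCoupling (P.prod Q) P Q := by
  refine ⟨inferInstance, ?_, ?_⟩ <;> simp

lemma Wc_bddBelow {X : Type*} [MeasurableSpace X] {m : X → X → ℝ}
    (hm0 : ∀ a b, 0 ≤ m a b) (P Q : Measure X) :
    BddBelow {r : ℝ | ∃ γ : Measure (X × X), IsCoupling γ P Q ∧ r = ∫ z, m z.1 z.2 ∂γ} := by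
  refine ⟨0, ?_⟩
  rintro r ⟨γ, hγ, rfl⟩
  exact MeasureTheory.integral_nonneg fun z => hm0 _ _

lemma Wc_nonneg {X : Type*} [MeasurableSpace X] {m : X → X → ℝ}
    (hm0 : ∀ a b, 0 ≤ m a b) (P Q : Measure X) : 0 ≤ Wc m P Q := by
  apply Real.sInf_nonneg
  rintro r ⟨γ, hγ, rfl⟩
  exact MeasureTheory.integral_nonneg fun z => hm0 _ _

lemma Wc_le_one {X : Type*} [MeasurableSpace X] {m : X → X → ℝ}
    (hm : Measurable fun p : X × X => m p.1 p.2)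
    (hm0 : ∀ a b, 0 ≤ m a b) (hm1 : ∀ a b, m a b ≤ 1)
    (P Q : Measure X) [IsProbabilityMeasure P] [IsProbabilityMeasure Q] :
    Wc m P Q ≤ 1 := by
  refine csInf_le_of_le (Wc_bddBelow hm0 P Q) ⟨P.prod Q, isCoupling_prod P Q, rfl⟩ ?_
  have hint : MeasureTheory.Integrable (fun z : X × X => m z.1 z.2) (P.prod Q) := by
    refine (MeasureTheory.integrable_const (1 : ℝ)).mono' hm.aestronglyMeasurable ?_
    exact Filter.Eventually.of_forall fun z => by
      rw [Real.norm_eq_abs, abs_of_nonneg (hm0 _ _)]; exact hm1 _ _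
  calc ∫ z, m z.1 z.2 ∂(P.prod Q) ≤ ∫ _z, (1 : ℝ) ∂(P.prod Q) :=
        MeasureTheory.integral_mono hint (MeasureTheory.integrable_const 1) fun z => hm1 _ _
    _ = 1 := by simp

variable {E : Type*}

lemma udisc_term_le_one [PseudoMetricSpace E] {c : ℝ} {m : E → E → ℝ}
    (hc0 : 0 < c) (hc1 : c ≤ 1) (hm0 : ∀ a b, 0 ≤ m a b) (hm1 : ∀ a b, m a b ≤ 1)
    (ω ω' : Traj E) (t : ℝ≥0) : c ^ (t : ℝ) * m (ω t) (ω' t) ≤ 1 := by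
  have h1 : c ^ (t : ℝ) ≤ 1 := Real.rpow_le_one hc0.le hc1 t.coe_nonneg
  calc c ^ (t : ℝ) * m (ω t) (ω' t) ≤ 1 * 1 :=
        mul_le_mul h1 (hm1 _ _) (hm0 _ _) one_pos.le
    _ = 1 := one_mul 1

lemma udisc_bddAbove [PseudoMetricSpace E] {c : ℝ} {m : E → E → ℝ}
    (hc0 : 0 < c) (hc1 : c ≤ 1) (hm0 : ∀ a b, 0 ≤ m a b) (hm1 : ∀ a b, m a b ≤ 1)
    (ω ω' : Traj E) :
    BddAbove (Set.range fun t : ℝ≥0 => c ^ (t : ℝ) * m (ω t) (ω' t)) := by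
  refine ⟨1, ?_⟩
  rintro r ⟨t, rfl⟩
  exact udisc_term_le_one hc0 hc1 hm0 hm1 ω ω' t

lemma le_udisc [PseudoMetricSpace E] {c : ℝ} {m : E → E → ℝ}
    (hc0 : 0 < c) (hc1 : c ≤ 1) (hm0 : ∀ a b, 0 ≤ m a b) (hm1 : ∀ a b, m a b ≤ 1)
    (ω ω' : Traj E) (t : ℝ≥0) : c ^ (t : ℝ) * m (ω t) (ω' t) ≤ Udisc c m ω ω' :=
  le_ciSup (udisc_bddAbove hc0 hc1 hm0 hm1 ω ω') t

lemma udisc_nonneg [PseudoMetricSpace E] {c : ℝ} {m : E → E → ℝ}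
    (hc0 : 0 < c) (hc1 : c ≤ 1) (hm0 : ∀ a b, 0 ≤ m a b) (hm1 : ∀ a b, m a b ≤ 1)
    (ω ω' : Traj E) : 0 ≤ Udisc c m ω ω' :=
  le_trans (mul_nonneg (Real.rpow_nonneg hc0.le _) (hm0 _ _))
    (le_udisc hc0 hc1 hm0 hm1 ω ω' 0)

lemma udisc_le_one [PseudoMetricSpace E] {c : ℝ} {m : E → E → ℝ}
    (hc0 : 0 < c) (hc1 : c ≤ 1) (hm0 : ∀ a b, 0 ≤ m a b) (hm1 : ∀ a b, m a b ≤ 1)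
    (ω ω' : Traj E) : Udisc c m ω ω' ≤ 1 :=
  ciSup_le fun t => udisc_term_le_one hc0 hc1 hm0 hm1 ω ω' t

/-- The discounted sup can be computed over a countable dense set of times. -/
lemma udisc_eq_iSup_denseSeq [MetricSpace E] {c : ℝ} {m : E → E → ℝ}
    (hc0 : 0 < c) (hc1 : c ≤ 1) (hm0 : ∀ a b, 0 ≤ m a b) (hm1 : ∀ a b, m a b ≤ 1)
    (hlsc : LowerSemicontinuous fun p : E × E => m p.1 p.2)
    (ω ω' : Traj E) :
    Udisc c m ω ω' = ⨆ n : ℕ, c ^ ((denseSeq ℝ≥0 n : ℝ≥0) : ℝ)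
      * m (ω (denseSeq ℝ≥0 n)) (ω' (denseSeq ℝ≥0 n)) := by
  have hbddS : BddAbove (Set.range fun n : ℕ => c ^ ((denseSeq ℝ≥0 n : ℝ≥0) : ℝ)
      * m (ω (denseSeq ℝ≥0 n)) (ω' (denseSeq ℝ≥0 n))) := by
    refine ⟨1, ?_⟩
    rintro r ⟨n, rfl⟩
    exact udisc_term_le_one hc0 hc1 hm0 hm1 ω ω' _
  apply le_antisymm
  · refine ciSup_le fun t => ?_
    refine le_of_forall_lt fun b hb => ?_
    have hev : ∀ᶠ s : ℝ≥0 in nhds t, b < c ^ (s : ℝ) * m (ω s) (ω' s) := by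
      rcases lt_or_ge b 0 with hb0 | hb0
      · exact Filter.Eventually.of_forall fun s =>
          hb0.trans_le (mul_nonneg (Real.rpow_nonneg hc0.le _) (hm0 _ _))
      · have hct : (0 : ℝ) < c ^ (t : ℝ) := Real.rpow_pos_of_pos hc0 _
        have hM : b / c ^ (t : ℝ) < m (ω t) (ω' t) := (div_lt_iff₀ hct).mpr (by
          calc b < c ^ (t : ℝ) * m (ω t) (ω' t) := hb
            _ = m (ω t) (ω' t) * c ^ (t : ℝ) := mul_comm _ _)
        obtain ⟨r, hr1, hr2⟩ := exists_between hM
        have hr0 : 0 < r := lt_of_le_of_lt (div_nonneg hb0 hct.le) hr1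
        have h1 : ∀ᶠ s : ℝ≥0 in nhds t, r < m (ω s) (ω' s) := by
          have hls := hlsc (ω t, ω' t) r hr2
          have hcont : ContinuousAt (fun s : ℝ≥0 => ((ω s, ω' s) : E × E)) t :=
            (ω.continuous.prodMk ω'.continuous).continuousAt
          exact hcont.tendsto.eventually hls
        have h2 : ∀ᶠ s : ℝ≥0 in nhds t, b / r < c ^ (s : ℝ) := by
          have hlt : b / r < c ^ (t : ℝ) := (div_lt_iff₀ hr0).mpr (by
            calc b < r * c ^ (t : ℝ) := by
                  have := (div_lt_iff₀ hct).mp hr1; linarith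
              _ = c ^ (t : ℝ) * r := mul_comm _ _)
          have hcont : ContinuousAt (fun s : ℝ≥0 => c ^ (s : ℝ)) t :=
            (Real.continuousAt_const_rpow hc0.ne').comp NNReal.continuous_coe.continuousAt
          exact hcont.tendsto.eventually (eventually_gt_nhds hlt)
        filter_upwards [h1, h2] with s hs1 hs2
        calc b = (b / r) * r := (div_mul_cancel₀ b hr0.ne').symm
          _ < c ^ (s : ℝ) * m (ω s) (ω' s) :=
            mul_lt_mul'' hs2 hs1 (div_nonneg hb0 hr0.le) hr0.le
    obtain ⟨U, hUsub, hUopen, htU⟩ := eventually_nhds_iff.mp hev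
    obtain ⟨n, hn⟩ := (denseRange_denseSeq ℝ≥0).exists_mem_open hUopen ⟨t, htU⟩
    exact lt_of_lt_of_le (hUsub _ hn) (le_ciSup hbddS n)
  · exact ciSup_le fun n => le_udisc hc0 hc1 hm0 hm1 ω ω' _

lemma udisc_measurable [MetricSpace E] [PolishSpace E] [MeasurableSpace E] [BorelSpace E]
    {c : ℝ} {m : E → E → ℝ}
    (hc0 : 0 < c) (hc1 : c ≤ 1) (hm0 : ∀ a b, 0 ≤ m a b) (hm1 : ∀ a b, m a b ≤ 1)
    (hlsc : LowerSemicontinuous fun p : E × E => m p.1 p.2) :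
    Measurable fun p : Traj E × Traj E => Udisc c m p.1 p.2 := by
  have hmE : Measurable fun p : E × E => m p.1 p.2 := hlsc.measurable
  have heq : (fun p : Traj E × Traj E => Udisc c m p.1 p.2)
      = fun p => ⨆ n : ℕ, c ^ ((denseSeq ℝ≥0 n : ℝ≥0) : ℝ)
          * m (p.1 (denseSeq ℝ≥0 n)) (p.2 (denseSeq ℝ≥0 n)) :=
    funext fun p => udisc_eq_iSup_denseSeq hc0 hc1 hm0 hm1 hlsc p.1 p.2
  rw [heq]
  apply Measurable.iSup
  intro n
  apply Measurable.const_mul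
  have hev : Measurable fun ω : Traj E => ω (denseSeq ℝ≥0 n) :=
    (continuous_eval_const _).measurable
  exact hmE.comp ((hev.comp measurable_fst).prodMk (hev.comp measurable_snd))

end Aux

theorem le_Ffun_le_Gfun
    {E : Type*} [MetricSpace E] [PolishSpace E] [MeasurableSpace E] [BorelSpace E]
    (hΔ : ∀ x y : E, dist x y ≤ 1)
    (ℙ : E → Measure (Traj E)) (hprob : ∀ x, IsProbabilityMeasure (ℙ x))
    (hdirac : ∀ x : E, (ℙ x).map (fun ω => ω 0) = Measure.dirac x)
    (m : E → E → ℝ) (hpm : IsPseudometric m)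
    (hlsc : LowerSemicontinuous fun p : E × E => m p.1 p.2)
    (c : ℝ) (hc0 : 0 < c) (hc1 : c ≤ 1) (x y : E) :
    m x y ≤ Ffun ℙ c m x y ∧ Ffun ℙ c m x y ≤ Gfun ℙ c m x y := by
  have hm0 := hpm.nonneg
  have hm1 := hpm.le_one
  have hmE : Measurable fun p : E × E => m p.1 p.2 := hlsc.measurable
  haveI := hprob x; haveI := hprob y
  have hevm : ∀ t : ℝ≥0, Measurable fun ω : Traj E => ω t := fun t =>
    (continuous_eval_const _).measurable
  haveI hker : ∀ (t : ℝ≥0) (z : E), IsProbabilityMeasure (kernelAt ℙ t z) := fun t z => by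
    haveI := hprob z
    exact Measure.isProbabilityMeasure_map (hevm t).aemeasurable
  -- bound : Wc ∈ [0,1]
  have hWle : ∀ t : ℝ≥0, Wc m (kernelAt ℙ t x) (kernelAt ℙ t y) ≤ 1 := fun t => by
    haveI := hker t x; haveI := hker t y
    exact Wc_le_one hmE hm0 hm1 _ _
  have hWnn : ∀ t : ℝ≥0, 0 ≤ Wc m (kernelAt ℙ t x) (kernelAt ℙ t y) := fun t =>
    Wc_nonneg hm0 _ _
  have hFbdd : BddAbove (Set.range fun t : ℝ≥0 =>
      c ^ (t : ℝ) * Wc m (kernelAt ℙ t x) (kernelAt ℙ t y)) := by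
    refine ⟨1, ?_⟩
    rintro r ⟨t, rfl⟩
    calc c ^ (t : ℝ) * Wc m (kernelAt ℙ t x) (kernelAt ℙ t y) ≤ 1 * 1 :=
          mul_le_mul (Real.rpow_le_one hc0.le hc1 t.coe_nonneg) (hWle t) (hWnn t) one_pos.le
      _ = 1 := one_mul 1
  constructor
  · -- m x y ≤ Ffun
    have hdx : kernelAt ℙ 0 x = Measure.dirac x := hdirac x
    have hdy : kernelAt ℙ 0 y = Measure.dirac y := hdirac y
    have hW0 : m x y ≤ Wc m (kernelAt ℙ 0 x) (kernelAt ℙ 0 y) := by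
      rw [hdx, hdy]
      refine le_csInf ⟨_, (Measure.dirac x).prod (Measure.dirac y),
        isCoupling_prod _ _, rfl⟩ ?_
      rintro r ⟨γ, ⟨hγp, hγ1, hγ2⟩, rfl⟩
      haveI := hγp
      have h1 : γ {z : E × E | z.1 ≠ x} = 0 := by
        have : {z : E × E | z.1 ≠ x} = Prod.fst ⁻¹' {x}ᶜ := rfl
        rw [this, ← Measure.map_apply measurable_fst (measurableSet_singleton x).compl, hγ1]
        simp
      have h2 : γ {z : E × E | z.2 ≠ y} = 0 := by
        have : {z : E × E | z.2 ≠ y} = Prod.snd ⁻¹' {y}ᶜ := rfl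
        rw [this, ← Measure.map_apply measurable_snd (measurableSet_singleton y).compl, hγ2]
        simp
      have hae : ∀ᵐ z ∂γ, m z.1 z.2 = m x y := by
        have hsub : {z : E × E | ¬ m z.1 z.2 = m x y}
            ⊆ {z : E × E | z.1 ≠ x} ∪ {z : E × E | z.2 ≠ y} := by
          intro z hz
          simp only [Set.mem_union, Set.mem_setOf_eq]
          by_contra hcon
          push_neg at hcon
          exact hz (by rw [hcon.1, hcon.2])
        have := measure_mono_null hsub (measure_union_null h1 h2)
        exact this
      rw [MeasureTheory.integral_congr_ae hae]
      simp
    refine le_ciSup_of_le hFbdd 0 ?_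
    have : c ^ ((0 : ℝ≥0) : ℝ) = 1 := by
      rw [NNReal.coe_zero, Real.rpow_zero]
    rw [this, one_mul]
    exact hW0
  · -- Ffun ≤ Gfun
    have hintU : ∀ γ : Measure (Traj E × Traj E), IsProbabilityMeasure γ →
        MeasureTheory.Integrable (fun z : Traj E × Traj E => Udisc c m z.1 z.2) γ := by
      intro γ hγp
      haveI := hγp
      refine (MeasureTheory.integrable_const (1 : ℝ)).mono'
        (udisc_measurable hc0 hc1 hm0 hm1 hlsc).aestronglyMeasurable ?_
      exact Filter.Eventually.of_forall fun z => by
        rw [Real.norm_eq_abs, abs_of_nonneg (udisc_nonneg hc0 hc1 hm0 hm1 _ _)]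
        exact udisc_le_one hc0 hc1 hm0 hm1 _ _
    refine le_csInf ⟨_, (ℙ x).prod (ℙ y), isCoupling_prod _ _, rfl⟩ ?_
    rintro r ⟨γ, ⟨hγp, hγ1, hγ2⟩, rfl⟩
    haveI := hγp
    refine ciSup_le fun t => ?_
    have hg : Measurable fun z : Traj E × Traj E => ((z.1 t, z.2 t) : E × E) :=
      ((hevm t).comp measurable_fst).prodMk ((hevm t).comp measurable_snd)
    set γt := γ.map (fun z : Traj E × Traj E => ((z.1 t, z.2 t) : E × E)) with hγt
    have hcoup : IsCoupling γt (kernelAt ℙ t x) (kernelAt ℙ t y) := by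
      refine ⟨Measure.isProbabilityMeasure_map hg.aemeasurable, ?_, ?_⟩
      · show γt.map Prod.fst = (ℙ x).map (fun ω => ω t)
        rw [hγt, Measure.map_map measurable_fst hg, ← hγ1,
          Measure.map_map (hevm t) measurable_fst]
        rfl
      · show γt.map Prod.snd = (ℙ y).map (fun ω => ω t)
        rw [hγt, Measure.map_map measurable_snd hg, ← hγ2,
          Measure.map_map (hevm t) measurable_snd]
        rfl
    have h1 : Wc m (kernelAt ℙ t x) (kernelAt ℙ t y) ≤ ∫ z, m z.1 z.2 ∂γt :=
      csInf_le (Wc_bddBelow hm0 _ _) ⟨γt, hcoup, rfl⟩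
    have h2 : ∫ z, m z.1 z.2 ∂γt = ∫ z : Traj E × Traj E, m (z.1 t) (z.2 t) ∂γ :=
      MeasureTheory.integral_map hg.aemeasurable hmE.aestronglyMeasurable
    have hct : (0 : ℝ) ≤ c ^ (t : ℝ) := (Real.rpow_pos_of_pos hc0 _).le
    have h4 : ∫ z : Traj E × Traj E, c ^ (t : ℝ) * m (z.1 t) (z.2 t) ∂γ
        ≤ ∫ z : Traj E × Traj E, Udisc c m z.1 z.2 ∂γ := by
      refine MeasureTheory.integral_mono_of_nonneg
        (Filter.Eventually.of_forall fun z => mul_nonneg hct (hm0 _ _))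
        (hintU γ hγp) (Filter.Eventually.of_forall fun z => ?_)
      exact le_udisc hc0 hc1 hm0 hm1 z.1 z.2 t
    calc c ^ (t : ℝ) * Wc m (kernelAt ℙ t x) (kernelAt ℙ t y)
        ≤ c ^ (t : ℝ) * ∫ z, m z.1 z.2 ∂γt := mul_le_mul_of_nonneg_left h1 hct
      _ = ∫ z : Traj E × Traj E, c ^ (t : ℝ) * m (z.1 t) (z.2 t) ∂γ := by
          rw [h2, MeasureTheory.integral_const_mul]
      _ ≤ ∫ z : Traj E × Traj E, Udisc c m z.1 z.2 ∂γ := h4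
end
end
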